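/- For a positive integer d, the rescaled Chebyshev polynomial P_d, viewed as the polynomial 2·T_d(X/2) over ℚ (a monic polynomial of degree d with integer coefficients), is irreducible over ℚ if and only if d is a power of 2. -/

import Mathlib

open Polynomial

noncomputable def pZ : ℕ → ℤ[X]
  | 0 => 2
  | 1 => X
  | (n+2) => X * pZ (n+1) - pZ n

noncomputable def pQ (k : ℤ) : ℚ[X] := C (2:ℚ) * (Polynomial.Chebyshev.T ℚ k).comp (C (2⁻¹ : ℚ) * X)

lemma C2_eq : C (2:ℚ) = 2 := map_ofNat C 2

lemma C2_C2inv : C (2:ℚ) * C (2⁻¹:ℚ) = 1 := by rw [← C_mul]; norm_num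

lemma pQ_zero : pQ 0 = 2 := by
  rw [pQ, Polynomial.Chebyshev.T_zero, one_comp, mul_one, C2_eq]

lemma pQ_one : pQ 1 = X := by
  simp only [pQ, Polynomial.Chebyshev.T_one, X_comp]
  rw [← mul_assoc, C2_C2inv, one_mul]

lemma pQ_add_two (n : ℤ) : pQ (n + 2) = X * pQ (n + 1) - pQ n := by
  simp only [pQ, Polynomial.Chebyshev.T_add_two, sub_comp, mul_comp, ofNat_comp, X_comp]
  linear_combination (2 * X * ((Polynomial.Chebyshev.T ℚ (n+1)).comp (C (2⁻¹:ℚ) * X))) * C2_C2inv - (X * ((Polynomial.Chebyshev.T ℚ (n+1)).comp (C (2⁻¹:ℚ) * X))) * C2_eq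

lemma pZ_map (n : ℕ) : (pZ n).map (Int.castRingHom ℚ) = pQ n := by
  induction n using Nat.strong_induction_on with
  | _ n ih =>
    match n with
    | 0 => simp [pZ, pQ_zero]
    | 1 => simp [pZ, pQ_one]
    | (m+2) =>
      have h1 := ih (m+1) (by omega)
      have h0 := ih m (by omega)
      have : ((m:ℤ) + 2 : ℤ) = ((m+2 : ℕ) : ℤ) := by push_cast; ring
      rw [pZ, Polynomial.map_sub, Polynomial.map_mul, Polynomial.map_X, h1, h0, ← this,
        pQ_add_two]
      push_cast
      ring_nf

lemma pQ_mul (m n : ℤ) : pQ (m * n) = (pQ m).comp (pQ n) := by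
  have h : C (2⁻¹:ℚ) * pQ n = (Polynomial.Chebyshev.T ℚ n).comp (C (2⁻¹:ℚ) * X) := by
    rw [pQ, ← mul_assoc, ← C_mul]; norm_num
  conv_rhs => rw [pQ, mul_comp, C_comp, comp_assoc, mul_comp, C_comp, X_comp, h]
  rw [pQ, Polynomial.Chebyshev.T_mul, comp_assoc]

lemma pZ_monic_deg : ∀ n : ℕ, 1 ≤ n → (pZ n).Monic ∧ (pZ n).natDegree = n := by
  intro n
  induction n using Nat.strong_induction_on with
  | _ n ih =>
    match n with
    | 0 => intro h; omega
    | 1 => intro _; exact ⟨monic_X, natDegree_X⟩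
    | (m+2) =>
      intro _
      obtain ⟨h1m, h1d⟩ := ih (m+1) (by omega) (by omega)
      have hXm : (X * pZ (m+1)).Monic := monic_X.mul h1m
      have hXd : (X * pZ (m+1)).natDegree = m + 2 := by
        rw [natDegree_mul (X_ne_zero) h1m.ne_zero, natDegree_X, h1d]; omega
      have hlt : (pZ m).natDegree < (X * pZ (m+1)).natDegree := by
        rw [hXd]
        rcases Nat.eq_zero_or_pos m with hm | hm
        · subst hm; simp [pZ]
        · have := (ih m (by omega) hm).2
          omega
      constructor
      · exact hXm.sub_of_left (degree_lt_degree hlt)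
      · rw [pZ, natDegree_sub_eq_left_of_natDegree_lt hlt, hXd]

lemma pQ_monic_deg (n : ℕ) (h : 1 ≤ n) : (pQ n).Monic ∧ (pQ n).natDegree = n := by
  obtain ⟨hm, hd⟩ := pZ_monic_deg n h
  rw [← pZ_map]
  constructor
  · exact hm.map _
  · rw [hm.natDegree_map]; exact hd

lemma pQ_odd_coeff_zero : ∀ k : ℕ, (pQ (2*k+1)).coeff 0 = 0 := by
  intro k
  induction k with
  | zero => simp [pQ_one]
  | succ k ih =>
    have : (2*(k+1)+1 : ℤ) = (2*k+1) + 2 := by ring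
    push_cast
    rw [this, pQ_add_two]
    rw [coeff_sub, mul_coeff_zero, coeff_X_zero, zero_mul, zero_sub]
    push_cast at ih
    rw [ih, neg_zero]

lemma pQ_two : pQ 2 = X^2 - 2 := by
  have : (2:ℤ) = 0 + 2 := by ring
  rw [this, pQ_add_two, show (0:ℤ)+1 = 1 from by ring, pQ_one, pQ_zero]; ring

lemma intMap_inj : Function.Injective (Polynomial.map (Int.castRingHom ℚ)) :=
  Polynomial.map_injective _ Int.cast_injective

lemma pZ_sq (n : ℕ) : pZ (2^(n+1)) = (pZ (2^n))^2 - 2 := by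
  apply intMap_inj
  rw [pZ_map, Polynomial.map_sub, Polynomial.map_pow, pZ_map]
  have h1 : ((2^(n+1) : ℕ) : ℤ) = 2 * ((2^n : ℕ) : ℤ) := by push_cast; ring
  rw [h1, pQ_mul, pQ_two]
  simp [sub_comp, pow_comp]

lemma pZ_mod2 (n : ℕ) : (pZ (2^n)).map (Int.castRingHom (ZMod 2)) = X^(2^n) := by
  induction n with
  | zero => simp [pZ, pow_one]
  | succ n ih =>
    rw [pZ_sq, Polynomial.map_sub, Polynomial.map_pow, ih]
    have : ((2:ℤ[X]).map (Int.castRingHom (ZMod 2))) = 0 := by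
      rw [Polynomial.map_ofNat, show (2:(ZMod 2)[X]) = C 2 from (map_ofNat C 2).symm,
        show (2:ZMod 2) = 0 from by decide, map_zero]
    rw [this, sub_zero, ← pow_mul, pow_succ]

lemma pZ_coeff0 : ∀ n : ℕ, 1 ≤ n → (pZ (2^n)).coeff 0 = -2 ∨ (pZ (2^n)).coeff 0 = 2 := by
  intro n h
  induction n with
  | zero => omega
  | succ n ih =>
    rcases Nat.eq_zero_or_pos n with hn | hn
    · subst hn
      left
      have : pZ (2^1) = X * X - 2 := by simp [pZ]
      rw [this]
      simp
    · right
      rw [pZ_sq]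
      rw [coeff_zero_eq_eval_zero] at *
      simp only [eval_sub, eval_pow, eval_ofNat]
      rcases ih hn with h | h <;> rw [h] <;> norm_num

lemma pZ_irreducible (n : ℕ) (hn : 1 ≤ n) : Irreducible (pZ (2^n)) := by
  obtain ⟨hmon, hdeg⟩ := pZ_monic_deg (2^n) Nat.one_le_two_pow
  have heis : (pZ (2^n)).IsEisensteinAt (Ideal.span {(2:ℤ)}) := by
    constructor
    · rw [hmon.leadingCoeff, Ideal.mem_span_singleton]
      norm_num
    · intro i hi
      rw [hdeg] at hi
      have hcoeff : ((pZ (2^n)).coeff i : ZMod 2) = 0 := by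
        have := congrArg (fun p => Polynomial.coeff p i) (pZ_mod2 n)
        simp only [coeff_map, eq_intCast] at this
        rw [this, coeff_X_pow, if_neg (by omega)]
      rw [Ideal.mem_span_singleton]
      exact_mod_cast (ZMod.intCast_zmod_eq_zero_iff_dvd _ 2).mp hcoeff
    · rw [Ideal.span_singleton_pow, Ideal.mem_span_singleton]
      rcases pZ_coeff0 n hn with h | h <;> rw [h] <;> norm_num
  exact heis.irreducible ((Ideal.span_singleton_prime (by norm_num)).mpr Int.prime_two)
    hmon.isPrimitive (by rw [hdeg]; positivity)

lemma pQ_pow_irreducible (n : ℕ) : Irreducible (pQ ((2^n : ℕ) : ℤ)) := by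
  rcases Nat.eq_zero_or_pos n with hn | hn
  · subst hn
    rw [show (((2^0 : ℕ)) : ℤ) = 1 by norm_num, pQ_one]
    exact irreducible_X
  · rw [← pZ_map]
    have hprim := (pZ_monic_deg (2^n) Nat.one_le_two_pow).1.isPrimitive
    have halg : algebraMap ℤ ℚ = Int.castRingHom ℚ := rfl
    rw [← halg]
    exact (hprim.irreducible_iff_irreducible_map_fraction_map).mp (pZ_irreducible n hn)

lemma pQ_not_irr (d : ℕ) (hd : 0 < d) (h : ¬∃ n : ℕ, d = 2^n) :
    ¬ Irreducible (pQ (d : ℤ)) := by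
  set a := d.factorization 2 with ha
  set m := d / 2^a with hm
  have hdm : 2^a * m = d := Nat.ordProj_mul_ordCompl_eq_self d 2
  have hodd : ¬ 2 ∣ m := Nat.not_dvd_ordCompl Nat.prime_two hd.ne'
  have hm0 : 0 < m := Nat.ordCompl_pos 2 hd.ne'
  have hm1 : m ≠ 1 := by
    intro h1
    exact h ⟨a, by rw [← hdm, h1, mul_one]⟩
  obtain ⟨k, hk⟩ : ∃ k, m = 2*k+1 := ⟨m/2, by omega⟩
  have hk1 : 1 ≤ k := by omega
  obtain ⟨q, hq⟩ : X ∣ pQ (m : ℤ) := by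
    rw [X_dvd_iff, hk]
    exact_mod_cast pQ_odd_coeff_zero k
  have heq : pQ (d : ℤ) = (pQ ((2^a : ℕ) : ℤ)) * (q.comp (pQ ((2^a : ℕ) : ℤ))) := by
    have : (d : ℤ) = (m : ℤ) * ((2^a : ℕ) : ℤ) := by
      push_cast
      push_cast at hdm
      linarith
    rw [this, pQ_mul, hq, mul_comp, X_comp]
  have hq0 : q ≠ 0 := by
    intro h0
    have := (pQ_monic_deg m hm0).1.ne_zero
    rw [hq, h0, mul_zero] at this
    exact this rfl
  have hqdeg : q.natDegree = m - 1 := by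
    have hdm' := (pQ_monic_deg m hm0).2
    rw [hq, natDegree_mul X_ne_zero hq0, natDegree_X] at hdm'
    omega
  have hdeg2a : (pQ ((2^a : ℕ) : ℤ)).natDegree = 2^a := (pQ_monic_deg _ Nat.one_le_two_pow).2
  intro hirr
  rcases hirr.isUnit_or_isUnit heq with hu | hu
  · exact not_isUnit_of_natDegree_pos _ (by rw [hdeg2a]; positivity) hu
  · refine not_isUnit_of_natDegree_pos _ ?_ hu
    rw [natDegree_comp, hqdeg, hdeg2a]
    have : 0 < 2^a := Nat.pow_pos (by norm_num)
    have : 2 ≤ m - 1 := by omega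
    positivity

/-- For a positive integer `d`, the rescaled Chebyshev polynomial `P_d = 2·T_d(X/2)`,
viewed over `ℚ`, is irreducible over `ℚ` if and only if `d` is a power of `2`. -/
theorem chebyshev_irreducible_iff (d : ℕ) (hd : 0 < d) :
    Irreducible (C (2 : ℚ) * (Polynomial.Chebyshev.T ℚ d).comp (C (2⁻¹ : ℚ) * X)) ↔
      ∃ n : ℕ, d = 2 ^ n := by
  show Irreducible (pQ (d : ℤ)) ↔ _
  constructor
  · intro hirr
    by_contra h
    exact pQ_not_irr d hd h hirr
  · rintro ⟨n, rfl⟩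
    exact_mod_cast pQ_pow_irreducible n
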